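/- The linear map $\phi$ sending $\sum_{j,k} a_{jk} T_{jk}$ (finite sum) to $\sum_{j,k} a_{jk} e^{2\pi i j x} e^{i k t}$ is an isometry from the span $E$ of $\{T_{jk}\}$ with norm $\|\cdot\|_G$ into $L^2([0,1]\times[-\pi,\pi])$ with the normalized $L^2$ norm; hence its completion $\mathcal{G}$ is isometrically isomorphic to $L^2([0,1]\times[-\pi,\pi])$. -/

import Mathlib

open Filter Finset MeasureTheory
open scoped ENNReal

noncomputable section

/-- The index set `I = (0,1] ∩ ℚ`. -/
abbrev Iq : Type := {q : ℚ // 0 < q ∧ q ≤ 1}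

/-- The Hilbert space `ℋ² = ⊕_{l ∈ I} H²[-π,π]`, realized via the orthonormal basis
`{e_{lk} : l ∈ I, k ∈ ℕ}` as `ℓ²(I × ℕ)`. -/
abbrev H2 : Type := lp (fun _ : Iq × ℕ => ℂ) 2

/-- The basis vector `e_{lk}` of `ℋ²` (zero if `l ∉ (0,1]`). -/
def basisVec (l : ℚ) (k : ℕ) : H2 :=
  if h : 0 < l ∧ l ≤ 1 then lp.single 2 ((⟨l, h⟩ : Iq), k) (1 : ℂ) else 0

/-- Index set for `Bₙ = {e_{lr} : r = 0,…,⌊n/⌊√n⌋⌋-1, l ∈ I_{⌊√n⌋}}`: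
pairs `(p, r)` with `1 ≤ p ≤ ⌊√n⌋` and `r < ⌊n/⌊√n⌋⌋`, where `l = p/⌊√n⌋`. -/
def Bfin (n : ℕ) : Finset (ℕ × ℕ) :=
  (Finset.Icc 1 (Nat.sqrt n)) ×ˢ (Finset.range (n / Nat.sqrt n))

/-- The basis vector of `Bₙ` indexed by `(p, r)`, namely `e_{p/⌊√n⌋, r}`. -/
def bvec (n : ℕ) (pr : ℕ × ℕ) : H2 :=
  basisVec ((pr.1 : ℚ) / (Nat.sqrt n : ℚ)) pr.2

/-- `∑_{e ∈ C} ‖Te‖²` for a subset `C` of the index set of `Bₙ`. -/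
def sumSq (T : H2 → H2) (n : ℕ) (C : Finset (ℕ × ℕ)) : ℝ :=
  ∑ pr ∈ C, ‖T (bvec n pr)‖ ^ 2

/-- The seminorm `Q(T) = inf { limsup_n (1/√n)(∑_{e ∈ Cₙ} ‖Te‖²)^{1/2} }`, the infimum
over all decompositions `Bₙ = Cₙ ⊔ Dₙ` with `#Dₙ = o(n)`, valued in `ℝ≥0∞`. -/
def QQ (T : H2 → H2) : ℝ≥0∞ :=
  ⨅ (C : ℕ → Finset (ℕ × ℕ)) (_ : ∀ n, C n ⊆ Bfin n)
    (_ : Tendsto (fun n => ((Bfin n \ C n).card : ℝ) / n) atTop (nhds 0)),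
    Filter.limsup (fun n => ENNReal.ofReal (Real.sqrt (sumSq T n (C n) / n))) atTop

/-- `T` acts like the operator `T_{jk}`:
`T(e_{lr}) = e^{2πijl} e_{l,r+k}` when `r + k ≥ 0`, and `0` otherwise. -/
def IsTjk (T : H2 → H2) (j k : ℤ) : Prop :=
  ∀ (l : ℚ) (r : ℕ), T (basisVec l r) =
    if 0 ≤ (r : ℤ) + k then
      Complex.exp (2 * Real.pi * Complex.I * (j : ℂ) * (l : ℂ)) • basisVec l ((r : ℤ) + k).toNat
    else 0

/-!
For `r` beyond the largest shift `|k|` no `T_{jk}` truncates `e_{lr}`, so vectors coming from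
different `k` are orthogonal, and on the grid `l = p/m`, `p = 1, …, m`, the characters `e^{2πijl}`
are orthogonal as soon as `m` exceeds every `|j - j'|` (sums of roots of unity vanish). Hence every
such row of `Bₙ` contributes exactly `m ∑ |a_{jk}|²` with `m = ⌊√n⌋`, while the boundedly many
truncated rows contribute `O(√n) = o(n)`. On the other side `∑ |a_{jk}|²` is the normalised
`L²` norm of `φ(T)`, by orthonormality of `e^{2πijx} e^{ikt}`.
-/

open Complex ComplexConjugate
open scoped Real InnerProductSpace Topology

theorem conj_exp_mul_exp {c : ℂ} (hc : conj c = -c) (j j' : ℤ) {x : ℂ} (hx : conj x = x) :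
    conj (exp (c * j * x)) * exp (c * j' * x) = exp (c * ↑(j' - j) * x) := by
  rw [← exp_conj, ← exp_add]
  congr 1
  simp only [map_mul, hc, hx, map_intCast]
  push_cast
  ring

theorem conj_two_pi_mul_I : conj (2 * π * I : ℂ) = -(2 * π * I) := by
  simp only [map_mul, map_ofNat, conj_ofReal, conj_I]
  ring

theorem sum_sum_conj_mul_mul_ite {ι : Type*} [DecidableEq ι] (s : Finset ι) (a : ι → ℂ)
    (c : ℂ) :
    ∑ u ∈ s, ∑ v ∈ s, conj (a u) * a v * (if u = v then c else 0) =
      c * ∑ u ∈ s, (‖a u‖ ^ 2 : ℂ) := by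
  simp [Finset.mul_sum, mul_comm, mul_conj']

theorem ofReal_sum_norm_sum_smul_sq {ι κ E : Type*} [DecidableEq ι] [NormedAddCommGroup E]
    [InnerProductSpace ℂ E] (s : Finset ι) (P : Finset κ) (a : ι → ℂ) (x : ι → κ → E) (c : ℂ)
    (hx : ∀ u ∈ s, ∀ v ∈ s, ∑ p ∈ P, ⟪x u p, x v p⟫_ℂ = if u = v then c else 0) :
    ((∑ p ∈ P, ‖∑ u ∈ s, a u • x u p‖ ^ 2 : ℝ) : ℂ) = c * ∑ u ∈ s, (‖a u‖ ^ 2 : ℂ) := by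
  have hexpand (p : κ) : ((‖∑ u ∈ s, a u • x u p‖ ^ 2 : ℝ) : ℂ) =
      ∑ u ∈ s, ∑ v ∈ s, conj (a u) * a v * ⟪x u p, x v p⟫_ℂ := by
    rw [show ((‖∑ u ∈ s, a u • x u p‖ ^ 2 : ℝ) : ℂ) =
        ⟪∑ u ∈ s, a u • x u p, ∑ u ∈ s, a u • x u p⟫_ℂ by simp, sum_inner]
    simp only [inner_sum, inner_smul_left, inner_smul_right, mul_assoc, mul_left_comm]
  rw [← sum_sum_conj_mul_mul_ite, Complex.ofReal_sum, Finset.sum_congr rfl fun p _ => hexpand p,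
    Finset.sum_comm]
  refine Finset.sum_congr rfl fun u hu => ?_
  rw [Finset.sum_comm]
  refine Finset.sum_congr rfl fun v hv => ?_
  rw [← hx u hu v hv, Finset.mul_sum]

theorem integral_exp_int_mul {c : ℂ} {a b : ℝ} (hc : c ≠ 0) (hper : exp (c * (b - a)) = 1)
    (d : ℤ) : ∫ t in a..b, exp (c * d * t) = if d = 0 then (b - a : ℂ) else 0 := by
  split_ifs with hd
  · simp [hd]
  · have hcd : c * d ≠ 0 := mul_ne_zero hc (Int.cast_ne_zero.2 hd)
    have hend : exp (c * d * b) = exp (c * d * a) := by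
      calc exp (c * d * b) = exp (d * (c * (b - a))) * exp (c * d * a) := by
            rw [← exp_add]; ring_nf
        _ = exp (c * d * a) := by rw [exp_int_mul, hper, one_zpow, one_mul]
    rw [integral_exp_mul_complex hcd, hend, sub_self, zero_div]

theorem integral_exp_two_pi_I_int_mul (d : ℤ) :
    ∫ x in (0 : ℝ)..1, exp (2 * π * I * d * x) = if d = 0 then 1 else 0 := by
  rw [integral_exp_int_mul two_pi_I_ne_zero (by simp) d]
  norm_num

theorem integral_exp_I_int_mul (d : ℤ) :
    ∫ t in -π..π, exp (I * d * t) = if d = 0 then (2 * π : ℂ) else 0 := by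
  rw [integral_exp_int_mul I_ne_zero (by rw [← exp_two_pi_mul_I]; push_cast; ring_nf) d]
  push_cast
  ring_nf

theorem intervalIntegral_intervalIntegral_sum_mul {ι : Type*} (S : Finset ι) (C : ι → ℂ)
    {g h : ι → ℝ → ℂ} (hg : ∀ w, Continuous (g w)) (hh : ∀ w, Continuous (h w)) (a b c d : ℝ) :
    ∫ x in a..b, ∫ t in c..d, ∑ w ∈ S, C w * (g w x * h w t) =
      ∑ w ∈ S, C w * ((∫ x in a..b, g w x) * ∫ t in c..d, h w t) := by
  have hinner (x : ℝ) : ∫ t in c..d, ∑ w ∈ S, C w * (g w x * h w t) =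
      ∑ w ∈ S, C w * g w x * ∫ t in c..d, h w t := by
    rw [intervalIntegral.integral_finsetSum fun w _ => ?_]
    · simp only [← mul_assoc, intervalIntegral.integral_const_mul]
    · exact (continuous_const.mul (continuous_const.mul (hh w))).intervalIntegrable _ _
  simp only [hinner]
  rw [intervalIntegral.integral_finsetSum fun w _ => ?_]
  · simp only [intervalIntegral.integral_mul_const, intervalIntegral.integral_const_mul, mul_assoc]
  · exact ((continuous_const.mul (hg w)).mul continuous_const).intervalIntegrable _ _

theorem ofReal_norm_sq_sum_exp_mul_exp (s : Finset (ℤ × ℤ)) (a : ℤ × ℤ → ℂ) (x t : ℝ) :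
    ((‖∑ jk ∈ s, a jk * exp (2 * π * I * jk.1 * x) * exp (I * jk.2 * t)‖ ^ 2 : ℝ) : ℂ) =
      ∑ w ∈ s ×ˢ s, conj (a w.1) * a w.2 *
        (exp (2 * π * I * ↑(w.2.1 - w.1.1) * x) * exp (I * ↑(w.2.2 - w.1.2) * t)) := by
  rw [Complex.ofReal_pow, ← conj_mul', map_sum, Finset.sum_mul_sum, ← Finset.sum_product']
  refine Finset.sum_congr rfl fun w _ => ?_
  rw [← conj_exp_mul_exp conj_two_pi_mul_I _ _ (conj_ofReal x),
    ← conj_exp_mul_exp (c := I) conj_I _ _ (conj_ofReal t)]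
  simp only [map_mul]
  ring

theorem integral_norm_sq_sum_exp_mul_exp (s : Finset (ℤ × ℤ)) (a : ℤ × ℤ → ℂ) :
    (1 / (2 * π)) * ∫ x in (0 : ℝ)..1, ∫ t in -π..π,
        ‖∑ jk ∈ s, a jk * exp (2 * π * I * jk.1 * x) * exp (I * jk.2 * t)‖ ^ 2 =
      ∑ jk ∈ s, ‖a jk‖ ^ 2 := by
  have horth (u v : ℤ × ℤ) : (∫ x in (0 : ℝ)..1, exp (2 * π * I * ↑(v.1 - u.1) * x)) *
      (∫ t in -π..π, exp (I * ↑(v.2 - u.2) * t)) = if u = v then (2 * π : ℂ) else 0 := by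
    rw [integral_exp_two_pi_I_int_mul, integral_exp_I_int_mul]
    simp only [sub_eq_zero, Prod.ext_iff, eq_comm (a := v.1), eq_comm (a := v.2)]
    split_ifs <;> simp_all
  have hcomplex : ((∫ x in (0 : ℝ)..1, ∫ t in -π..π,
        ‖∑ jk ∈ s, a jk * exp (2 * π * I * jk.1 * x) * exp (I * jk.2 * t)‖ ^ 2 : ℝ) : ℂ) =
      2 * π * ∑ jk ∈ s, (‖a jk‖ ^ 2 : ℂ) := by
    simp only [← intervalIntegral.integral_ofReal, ofReal_norm_sq_sum_exp_mul_exp]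
    rw [intervalIntegral_intervalIntegral_sum_mul _ _ (by fun_prop) (by fun_prop),
      Finset.sum_product' (f := fun u v => conj (a u) * a v *
        ((∫ x in (0 : ℝ)..1, exp (2 * π * I * ↑(v.1 - u.1) * x)) *
          ∫ t in -π..π, exp (I * ↑(v.2 - u.2) * t))), ← sum_sum_conj_mul_mul_ite]
    simp only [horth]
  apply Complex.ofReal_injective
  push_cast
  rw [hcomplex]
  field_simp

theorem sum_Icc_exp_two_pi_I_int_mul_div {m : ℕ} {d : ℤ} (hd : d.natAbs < m) :
    ∑ p ∈ Icc 1 m, exp (2 * π * I * d * ((p : ℂ) / m)) = if d = 0 then (m : ℂ) else 0 := by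
  have hm : (m : ℂ) ≠ 0 := Nat.cast_ne_zero.2 (by omega)
  split_ifs with hd0
  · simp [hd0]
  set ω := exp (2 * π * I * d / m)
  have hpow (p : ℕ) : exp (2 * π * I * d * ((p : ℂ) / m)) = ω ^ p := by
    rw [← exp_nat_mul]; ring_nf
  have hωm : ω ^ m = 1 := by
    rw [← exp_nat_mul, mul_div_cancel₀ _ hm, mul_comm, ← exp_int_mul_two_pi_mul_I d]
  have hω1 : ω ≠ 1 := by
    rw [Ne, exp_eq_one_iff]
    rintro ⟨n, hn⟩
    have hdn : d = n * m := by
      field_simp at hn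
      exact_mod_cast hn.trans (mul_comm _ _)
    exact hd0 (Int.eq_zero_of_abs_lt_dvd ⟨n, by rw [hdn, mul_comm]⟩
      (by rw [Int.abs_eq_natAbs]; omega))
  rw [Finset.sum_congr rfl fun p _ => hpow p, ← Finset.Ico_add_one_right_eq_Icc,
    Finset.sum_Ico_eq_sum_range, Nat.add_sub_cancel]
  simp only [pow_add, pow_one, ← Finset.mul_sum, geom_sum_eq hω1, hωm, sub_self, zero_div,
    mul_zero]

theorem inner_basisVec_basisVec {l : ℚ} (hl : 0 < l ∧ l ≤ 1) (k k' : ℕ) :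
    ⟪basisVec l k, basisVec l k'⟫_ℂ = if k = k' then 1 else 0 := by
  simp only [basisVec, dif_pos hl, lp.inner_single_left, lp.single_apply, Pi.single_apply]
  split_ifs <;> simp_all

theorem norm_basisVec_le (l : ℚ) (k : ℕ) : ‖basisVec l k‖ ≤ 1 := by
  unfold basisVec
  split_ifs
  · rw [lp.norm_single (by norm_num), norm_one]
  · simp

theorem norm_exp_two_pi_I_int_mul_ratCast (j : ℤ) (l : ℚ) : ‖exp (2 * π * I * j * l)‖ = 1 := by
  rw [show 2 * π * I * j * l = ((2 * π * j * l : ℝ) : ℂ) * I by push_cast; ring,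
    norm_exp_ofReal_mul_I]

namespace IsTjk

variable {T T' : H2 → H2} {j k j' k' : ℤ}

theorem norm_apply_basisVec_le (hT : IsTjk T j k) (l : ℚ) (r : ℕ) :
    ‖T (basisVec l r)‖ ≤ 1 := by
  rw [hT]
  split_ifs
  · rw [norm_smul, norm_exp_two_pi_I_int_mul_ratCast, one_mul]
    exact norm_basisVec_le _ _
  · simp

theorem inner_apply_basisVec (hT : IsTjk T j k) (hT' : IsTjk T' j' k') {l : ℚ}
    (hl : 0 < l ∧ l ≤ 1) {r : ℕ} (hr : 0 ≤ (r : ℤ) + k) (hr' : 0 ≤ (r : ℤ) + k') :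
    ⟪T (basisVec l r), T' (basisVec l r)⟫_ℂ =
      if k = k' then exp (2 * π * I * ↑(j' - j) * l) else 0 := by
  rw [hT, hT', if_pos hr, if_pos hr', inner_smul_left, inner_smul_right,
    inner_basisVec_basisVec hl, ← mul_assoc,
    conj_exp_mul_exp conj_two_pi_mul_I _ _ (map_ratCast _ _)]
  have hshift : ((r : ℤ) + k).toNat = ((r : ℤ) + k').toNat ↔ k = k' := by omega
  simp only [hshift, mul_ite, mul_one, mul_zero]

theorem sum_inner_apply_basisVec_div (hT : IsTjk T j k) (hT' : IsTjk T' j' k') {m : ℕ}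
    (hm : (j' - j).natAbs < m) {r : ℕ} (hr : 0 ≤ (r : ℤ) + k) (hr' : 0 ≤ (r : ℤ) + k') :
    ∑ p ∈ Icc 1 m, ⟪T (basisVec (p / m) r), T' (basisVec (p / m) r)⟫_ℂ =
      if (j, k) = (j', k') then (m : ℂ) else 0 := by
  have hl {p : ℕ} (hp : p ∈ Icc 1 m) : 0 < (p / m : ℚ) ∧ (p / m : ℚ) ≤ 1 := by
    rw [mem_Icc] at hp
    exact ⟨div_pos (by exact_mod_cast hp.1) (by exact_mod_cast hp.1.trans hp.2),
      div_le_one_of_le₀ (by exact_mod_cast hp.2) (by positivity)⟩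
  rw [Finset.sum_congr rfl fun p hp => inner_apply_basisVec hT hT' (hl hp) hr hr']
  simp only [Rat.cast_div, Rat.cast_natCast]
  rw [Finset.sum_ite_irrel, Finset.sum_const_zero, sum_Icc_exp_two_pi_I_int_mul_div hm]
  simp only [Prod.mk.injEq, sub_eq_zero, eq_comm (a := j')]
  split_ifs <;> simp_all

end IsTjk

section Rows

variable (s : Finset (ℤ × ℤ)) (a : ℤ × ℤ → ℂ) (Top : ℤ × ℤ → H2 → H2)

theorem norm_sum_smul_apply_basisVec_le (hTop : ∀ jk ∈ s, IsTjk (Top jk) jk.1 jk.2) (l : ℚ)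
    (r : ℕ) :
    ‖∑ u ∈ s, a u • Top u (basisVec l r)‖ ≤ ∑ u ∈ s, ‖a u‖ := by
  refine (norm_sum_le _ _).trans (Finset.sum_le_sum fun u hu => ?_)
  rw [norm_smul]
  exact mul_le_of_le_one_right (norm_nonneg _) ((hTop u hu).norm_apply_basisVec_le l r)

theorem sum_norm_sq_sum_smul_apply_basisVec_div (hTop : ∀ jk ∈ s, IsTjk (Top jk) jk.1 jk.2)
    {m r : ℕ} (hm : ∀ u ∈ s, ∀ v ∈ s, (v.1 - u.1).natAbs < m) (hr : ∀ u ∈ s, 0 ≤ (r : ℤ) + u.2) :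
    ∑ p ∈ Icc 1 m, ‖∑ u ∈ s, a u • Top u (basisVec (p / m) r)‖ ^ 2 =
      m * ∑ u ∈ s, ‖a u‖ ^ 2 := by
  apply Complex.ofReal_injective
  rw [ofReal_sum_norm_sum_smul_sq s (Icc 1 m) a (fun u (p : ℕ) => Top u (basisVec (p / m) r)) m
    fun u hu v hv => (hTop u hu).sum_inner_apply_basisVec_div (hTop v hv) (hm u hu v hv)
      (hr u hu) (hr v hv)]
  push_cast
  rfl

end Rows

theorem tendsto_nat_sqrt_atTop : Tendsto Nat.sqrt atTop atTop :=
  tendsto_atTop_atTop_of_monotone (fun _ _ => Nat.sqrt_le_sqrt) fun b => ⟨b * b, (Nat.sqrt_eq b).ge⟩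

theorem tendsto_nat_sqrt_div_self : Tendsto (fun n : ℕ => (Nat.sqrt n : ℝ) / n) atTop (𝓝 0) := by
  have hinv : Tendsto (fun n : ℕ => ((Nat.sqrt n : ℝ))⁻¹) atTop (𝓝 0) :=
    (tendsto_natCast_atTop_atTop.comp tendsto_nat_sqrt_atTop).inv_tendsto_atTop
  refine squeeze_zero' (Eventually.of_forall fun n => by positivity) ?_ hinv
  filter_upwards [eventually_ge_atTop 1] with n hn
  have hm : (0 : ℝ) < Nat.sqrt n := by exact_mod_cast Nat.sqrt_pos.2 hn
  calc (Nat.sqrt n : ℝ) / n ≤ Nat.sqrt n / (Nat.sqrt n * Nat.sqrt n) :=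
        div_le_div_of_nonneg_left hm.le (by positivity) (by exact_mod_cast Nat.sqrt_le n)
    _ = (Nat.sqrt n : ℝ)⁻¹ := by field_simp

theorem tendsto_div_nat_sqrt_mul_nat_sqrt_div_self :
    Tendsto (fun n : ℕ => ((n / Nat.sqrt n : ℕ) : ℝ) * Nat.sqrt n / n) atTop (𝓝 1) := by
  have hlower : Tendsto (fun n : ℕ => 1 - (Nat.sqrt n : ℝ) / n) atTop (𝓝 1) := by
    simpa using tendsto_nat_sqrt_div_self.const_sub 1
  refine tendsto_of_tendsto_of_tendsto_of_le_of_le' hlower tendsto_const_nhds ?_ ?_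
  all_goals filter_upwards [eventually_ge_atTop 1] with n hn
  all_goals have hn' : (0 : ℝ) < n := by exact_mod_cast hn
  · have hlt : n < n / Nat.sqrt n * Nat.sqrt n + Nat.sqrt n :=
      Nat.lt_div_mul_add (Nat.sqrt_pos.2 hn)
    rw [sub_le_iff_le_add, ← add_div, le_div_iff₀ hn', one_mul]
    exact_mod_cast hlt.le
  · rw [div_le_one hn']
    exact_mod_cast Nat.div_mul_le_self n (Nat.sqrt n)

theorem abs_sum_range_sub_le {f : ℕ → ℝ} {c B : ℝ} {K : ℕ} (hf : ∀ r, K ≤ r → f r = c)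
    (hB : ∀ r, |f r - c| ≤ B) (q : ℕ) : |∑ r ∈ range q, f r - q * c| ≤ K * B := by
  have htail : ∑ r ∈ range q, f r - q * c = ∑ r ∈ range (min q K), (f r - c) := by
    rw [Finset.sum_subset (range_subset_range.2 (min_le_left q K)) fun r hrq hrK => ?_,
      Finset.sum_sub_distrib, sum_const, card_range, nsmul_eq_mul]
    simp only [mem_range, lt_min_iff, not_and_or, not_lt] at hrq hrK
    rw [hf r (by omega), sub_self]
  calc |∑ r ∈ range q, f r - q * c| ≤ ∑ r ∈ range (min q K), |f r - c| :=
        htail ▸ abs_sum_le_sum_abs _ _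
    _ ≤ ∑ r ∈ range (min q K), B := sum_le_sum fun r _ => hB r
    _ = (min q K : ℕ) * B := by rw [sum_const, card_range, nsmul_eq_mul]
    _ ≤ K * B := mul_le_mul_of_nonneg_right (by exact_mod_cast min_le_right q K)
        ((abs_nonneg _).trans (hB 0))

theorem tendsto_average_sum_range_div_nat_sqrt (R : ℕ → ℕ → ℝ) {A D : ℝ} (K : ℕ) (hA : 0 ≤ A)
    (hR : ∀ᶠ n in atTop, ∀ r, K ≤ r → R n r = Nat.sqrt n * A)
    (hR0 : ∀ n r, 0 ≤ R n r) (hRD : ∀ n r, R n r ≤ Nat.sqrt n * D) :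
    Tendsto (fun n : ℕ => 1 / (n : ℝ) * ∑ r ∈ range (n / Nat.sqrt n), R n r) atTop (𝓝 A) := by
  have hmain : Tendsto (fun n : ℕ => ((n / Nat.sqrt n : ℕ) : ℝ) * Nat.sqrt n / n * A) atTop
      (𝓝 A) := by
    simpa using tendsto_div_nat_sqrt_mul_nat_sqrt_div_self.mul_const A
  have hsmall : Tendsto (fun n : ℕ => K * (D + A) * ((Nat.sqrt n : ℝ) / n)) atTop (𝓝 0) := by
    simpa using tendsto_nat_sqrt_div_self.const_mul (K * (D + A))
  have herr : ∀ᶠ n : ℕ in atTop, ‖1 / (n : ℝ) * ∑ r ∈ range (n / Nat.sqrt n), R n r -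
      ((n / Nat.sqrt n : ℕ) : ℝ) * Nat.sqrt n / n * A‖ ≤ K * (D + A) * ((Nat.sqrt n : ℝ) / n) := by
    filter_upwards [hR] with n hn
    have hrow : |∑ r ∈ range (n / Nat.sqrt n), R n r - (n / Nat.sqrt n : ℕ) * (Nat.sqrt n * A)|
        ≤ K * (Nat.sqrt n * (D + A)) :=
      abs_sum_range_sub_le hn (fun r => abs_sub_le_iff.2
        ⟨by nlinarith [hRD n r, hR0 n r], by nlinarith [hRD n r, hR0 n r]⟩) _
    rw [show 1 / (n : ℝ) * ∑ r ∈ range (n / Nat.sqrt n), R n r -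
          ((n / Nat.sqrt n : ℕ) : ℝ) * Nat.sqrt n / n * A =
        (∑ r ∈ range (n / Nat.sqrt n), R n r - (n / Nat.sqrt n : ℕ) * (Nat.sqrt n * A)) / n by ring,
      show (K : ℝ) * (D + A) * (Nat.sqrt n / n) = K * (Nat.sqrt n * (D + A)) / n by ring,
      Real.norm_eq_abs, abs_div, Nat.abs_cast]
    exact div_le_div_of_nonneg_right hrow (Nat.cast_nonneg _)
  simpa using hmain.add (squeeze_zero_norm' herr hsmall)

/-- The map `φ : ∑ a_{jk} T_{jk} ↦ ∑ a_{jk} e^{2πijx} e^{ikt}` is an isometry from the span `E`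
of the `T_{jk}` (with the `G`-norm) into `L²([0,1]×[-π,π])` with the normalized `L²` norm:
`‖T‖_G² = (1/2π) ∫₀¹ ∫_{-π}^{π} |φ(T)(x,t)|² dt dx`; hence the completion `𝒢` of `E` is
isometrically isomorphic to `L²([0,1]×[-π,π])`. -/
theorem phi_isometry (s : Finset (ℤ × ℤ)) (a : ℤ × ℤ → ℂ) (Top : ℤ × ℤ → H2 → H2)
    (hTop : ∀ jk ∈ s, IsTjk (Top jk) jk.1 jk.2) :
    Filter.Tendsto
      (fun n : ℕ => (1 / (n : ℝ)) * ∑ pr ∈ Bfin n, ‖∑ jk ∈ s, a jk • Top jk (bvec n pr)‖ ^ 2)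
      atTop
      (nhds ((1 / (2 * Real.pi)) * ∫ x in (0:ℝ)..1, ∫ t in (-Real.pi)..Real.pi,
        ‖∑ jk ∈ s, a jk * Complex.exp (2 * Real.pi * Complex.I * (jk.1 : ℂ) * (x : ℂ)) *
          Complex.exp (Complex.I * (jk.2 : ℂ) * (t : ℂ))‖ ^ 2)) := by
  rw [integral_norm_sq_sum_exp_mul_exp]
  have hrows (n : ℕ) : ∑ pr ∈ Bfin n, ‖∑ jk ∈ s, a jk • Top jk (bvec n pr)‖ ^ 2 =
      ∑ r ∈ range (n / Nat.sqrt n), ∑ p ∈ Icc 1 (Nat.sqrt n),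
        ‖∑ jk ∈ s, a jk • Top jk (basisVec (p / Nat.sqrt n) r)‖ ^ 2 := by
    rw [Bfin, sum_product, sum_comm]
    rfl
  set K := s.sup fun jk => jk.2.natAbs
  have hK (r : ℕ) (hr : K ≤ r) (jk : ℤ × ℤ) (hjk : jk ∈ s) : 0 ≤ (r : ℤ) + jk.2 := by
    have := Finset.le_sup (f := fun jk : ℤ × ℤ => jk.2.natAbs) hjk
    omega
  have hgrid : ∀ᶠ n in atTop, ∀ u ∈ s, ∀ v ∈ s, (v.1 - u.1).natAbs < Nat.sqrt n := by
    simp only [eventually_all_finset]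
    exact fun u _ v _ => tendsto_nat_sqrt_atTop.eventually_gt_atTop _
  simp only [hrows]
  refine tendsto_average_sum_range_div_nat_sqrt _ K (D := (∑ jk ∈ s, ‖a jk‖) ^ 2)
    (sum_nonneg fun _ _ => sq_nonneg _) ?_ (fun _ _ => sum_nonneg fun _ _ => sq_nonneg _)
    fun n r => ?_
  · filter_upwards [hgrid] with n hn r hr
    exact sum_norm_sq_sum_smul_apply_basisVec_div s a Top hTop hn (hK r hr)
  · calc _ ≤ ∑ p ∈ Icc 1 (Nat.sqrt n), (∑ jk ∈ s, ‖a jk‖) ^ 2 := sum_le_sum fun p _ =>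
          pow_le_pow_left₀ (norm_nonneg _) (norm_sum_smul_apply_basisVec_le s a Top hTop _ r) 2
      _ = _ := by simp
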